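/- arXiv:1810.07440 — 2 statements merged into one kernel-verified Lean document; each statement's English description precedes it below -/
import Mathlib

section
/- Let H be a real inner product space with inner product a(·,·) and norm |·|, and let V, W be subspaces satisfying the strengthened Cauchy–Schwarz inequality with constant γ ∈ [0,1): |a(v,w)| ≤ γ|v||w| for v ∈ V, w ∈ W. If x = v + w with v ∈ V, w ∈ W, then |w| ≤ (1 - γ²)^{-1/2} |x|. -/
open scoped RealInnerProductSpace

/-- Completing the square: `‖v + w‖² ≥ (‖v‖ - γ‖w‖)² + (1 - γ²)‖w‖²`. -/
theorem one_sub_sq_mul_norm_sq_le_norm_add_sq {H : Type*} [NormedAddCommGroup H]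
    [InnerProductSpace ℝ H] {γ : ℝ} {v w : H} (h : -(γ * ‖v‖ * ‖w‖) ≤ ⟪v, w⟫) :
    (1 - γ ^ 2) * ‖w‖ ^ 2 ≤ ‖v + w‖ ^ 2 := by
  rw [norm_add_sq_real]
  nlinarith [sq_nonneg (‖v‖ - γ * ‖w‖)]

theorem le_inv_sqrt_mul_of_mul_sq_le {a b c : ℝ} (hc : 0 < c) (ha : 0 ≤ a) (hb : 0 ≤ b)
    (h : c * a ^ 2 ≤ b ^ 2) : a ≤ (Real.sqrt c)⁻¹ * b := by
  have hsqrt : 0 < Real.sqrt c := Real.sqrt_pos.mpr hc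
  rw [inv_mul_eq_div, le_div_iff₀ hsqrt]
  refine (pow_le_pow_iff_left₀ (by positivity) hb two_ne_zero).mp ?_
  rwa [mul_pow, Real.sq_sqrt hc.le, mul_comm]

/-- Under the strengthened Cauchy–Schwarz inequality, if `x = v + w` then
`‖w‖ ≤ (1 - γ²)^{-1/2} ‖x‖`. -/
theorem stmt_3 {H : Type*} [NormedAddCommGroup H] [InnerProductSpace ℝ H]
    (V W : Submodule ℝ H) (γ : ℝ) (hγ0 : 0 ≤ γ) (hγ1 : γ < 1)
    (hCBS : ∀ v ∈ V, ∀ w ∈ W, |⟪v, w⟫| ≤ γ * ‖v‖ * ‖w‖)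
    (x v w : H) (hv : v ∈ V) (hw : w ∈ W) (hx : x = v + w) :
    ‖w‖ ≤ (Real.sqrt (1 - γ ^ 2))⁻¹ * ‖x‖ := by
  have hγ : 0 < 1 - γ ^ 2 := by nlinarith
  have hsq : (1 - γ ^ 2) * ‖w‖ ^ 2 ≤ ‖x‖ ^ 2 :=
    hx ▸ one_sub_sq_mul_norm_sq_le_norm_add_sq (abs_le.mp (hCBS v hv w hw)).1
  exact le_inv_sqrt_mul_of_mul_sq_le hγ (norm_nonneg w) (norm_nonneg x) hsq
end

section
/- In the setting of Lemma 4.3: let H be a real inner product space with inner product ā and norm |·|, with subspaces V_Λ, Ṽ, V_Q such that V_Q is ā-orthogonal to both V_Λ and Ṽ, and the strengthened Cauchy–Schwarz inequality |ā(v, ṽ)| ≤ γ|v||ṽ| holds for v ∈ V_Λ, ṽ ∈ Ṽ with γ ∈ [0,1). Let e* ∈ V_Λ ⊕ Ṽ ⊕ V_Q satisfy ā(e*, v) = R(v) for all v in this space with R vanishing on V_Λ, and let e₂ ∈ Ṽ ⊕ V_Q satisfy ā(e₂, v) = R(v) for all v ∈ Ṽ ⊕ V_Q. Then |e₂| ≤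 |e*| ≤ (1 - γ²)^{-1/2}|e₂|. -/
/-!
Testing the Galerkin equations against `e₂ ∈ Ṽ ⊕ V_Q` gives `ā(e*, e₂) = |e₂|²`, whence
`|e₂| ≤ |e*|`. For the upper bound write `e* = v + w` with `v ∈ V_Λ`, `w ∈ Ṽ ⊕ V_Q`. Since `R`
vanishes on `V_Λ`, `|e*|² = ā(e*, w) = R(w) = ā(e₂, w) ≤ |e₂| |w|`. Because `V_Q` is orthogonal
to `V_Λ` and `Ṽ`, the strengthened Cauchy–Schwarz inequality persists between `V_Λ` and
`Ṽ ⊕ V_Q`, and then `|v + w|² ≥ (1 - γ²) |w|²`. Combining, `|e*|² ≤ |e₂| |e*| / √(1 - γ²)`.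
-/

open scoped RealInnerProductSpace

section

variable {E : Type*} [NormedAddCommGroup E] [InnerProductSpace ℝ E]

theorem norm_le_of_inner_eq_norm_sq {x y : E} (h : ⟪x, y⟫ = ‖y‖ ^ 2) : ‖y‖ ≤ ‖x‖ := by
  rcases (norm_nonneg y).eq_or_lt with hy | hy
  · rw [← hy]
    exact norm_nonneg x
  · refine le_of_mul_le_mul_right ?_ hy
    calc ‖y‖ * ‖y‖ = ⟪x, y⟫ := by rw [h, sq]
      _ ≤ ‖x‖ * ‖y‖ := real_inner_le_norm x y

theorem norm_le_norm_add_of_inner_eq_zero {x y : E} (h : ⟪x, y⟫ = 0) : ‖x‖ ≤ ‖x + y‖ := by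
  have hpyth := norm_add_sq_eq_norm_sq_add_norm_sq_real h
  nlinarith [norm_nonneg x, norm_nonneg (x + y), mul_self_nonneg ‖y‖]

def StrengthenedCBS (γ : ℝ) (U V : Submodule ℝ E) : Prop :=
  ∀ u ∈ U, ∀ v ∈ V, |⟪u, v⟫| ≤ γ * ‖u‖ * ‖v‖

namespace StrengthenedCBS

variable {γ : ℝ} {U V W : Submodule ℝ E}

theorem sup_of_inner_eq_zero (h : StrengthenedCBS γ U V) (hγ : 0 ≤ γ)
    (hUW : ∀ u ∈ U, ∀ w ∈ W, ⟪u, w⟫ = 0) (hVW : ∀ v ∈ V, ∀ w ∈ W, ⟪v, w⟫ = 0) :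
    StrengthenedCBS γ U (V ⊔ W) := by
  intro u hu x hx
  obtain ⟨v, hv, w, hw, rfl⟩ := Submodule.mem_sup.mp hx
  calc |⟪u, v + w⟫| = |⟪u, v⟫| := by rw [inner_add_right, hUW u hu w hw, add_zero]
    _ ≤ γ * ‖u‖ * ‖v‖ := h u hu v hv
    _ ≤ γ * ‖u‖ * ‖v + w‖ := by
      gcongr
      exact norm_le_norm_add_of_inner_eq_zero (hVW v hv w hw)

theorem one_sub_sq_mul_norm_sq_le (h : StrengthenedCBS γ U V) {u v : E} (hu : u ∈ U) (hv : v ∈ V) :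
    (1 - γ ^ 2) * ‖v‖ ^ 2 ≤ ‖u + v‖ ^ 2 := by
  have hinner := neg_le_of_abs_le (h u hu v hv)
  rw [norm_add_sq_real]
  nlinarith [sq_nonneg (‖u‖ - γ * ‖v‖)]

theorem sqrt_one_sub_sq_mul_norm_le (h : StrengthenedCBS γ U V) {u v : E} (hu : u ∈ U)
    (hv : v ∈ V) : √(1 - γ ^ 2) * ‖v‖ ≤ ‖u + v‖ := by
  calc √(1 - γ ^ 2) * ‖v‖ = √((1 - γ ^ 2) * ‖v‖ ^ 2) := by
        rw [Real.sqrt_mul' _ (sq_nonneg _), Real.sqrt_sq (norm_nonneg v)]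
    _ ≤ √(‖u + v‖ ^ 2) := Real.sqrt_le_sqrt (h.one_sub_sq_mul_norm_sq_le hu hv)
    _ = ‖u + v‖ := Real.sqrt_sq (norm_nonneg _)

end StrengthenedCBS

end

theorem le_inv_mul_of_sq_le_mul {a b c s : ℝ} (hs : 0 < s) (hb : 0 ≤ b) (habc : a ^ 2 ≤ b * c)
    (hsc : s * c ≤ a) : a ≤ s⁻¹ * b := by
  rcases le_or_gt a 0 with ha | ha
  · exact ha.trans (by positivity)
  rw [inv_mul_eq_div, le_div_iff₀ hs]
  refine le_of_mul_le_mul_right ?_ ha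
  calc a * s * a = s * a ^ 2 := by ring
    _ ≤ s * (b * c) := mul_le_mul_of_nonneg_left habc hs.le
    _ = b * (s * c) := by ring
    _ ≤ b * a := mul_le_mul_of_nonneg_left hsc hb

/-- Lemma 4.3 (abstract form): two-sided equivalence `|e₂| ≤ |e*| ≤ (1-γ²)^{-1/2}|e₂|`
between the Galerkin solutions on the detail space and the enriched space. -/
theorem stmt_9 {H : Type*} [NormedAddCommGroup H] [InnerProductSpace ℝ H]
    (VΛ Vt VQ : Submodule ℝ H) (R : H →ₗ[ℝ] ℝ)
    (γ : ℝ) (hγ0 : 0 ≤ γ) (hγ1 : γ < 1)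
    (hCBS : ∀ v ∈ VΛ, ∀ w ∈ Vt, |⟪v, w⟫| ≤ γ * ‖v‖ * ‖w‖)
    (horthΛ : ∀ x ∈ VΛ, ∀ y ∈ VQ, ⟪x, y⟫ = 0)
    (hortht : ∀ x ∈ Vt, ∀ y ∈ VQ, ⟪x, y⟫ = 0)
    (hRΛ : ∀ v ∈ VΛ, R v = 0)
    (eStar : H) (heStar : eStar ∈ VΛ ⊔ Vt ⊔ VQ)
    (hGalStar : ∀ v ∈ VΛ ⊔ Vt ⊔ VQ, ⟪eStar, v⟫ = R v)
    (e2 : H) (he2 : e2 ∈ Vt ⊔ VQ)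
    (hGal2 : ∀ v ∈ Vt ⊔ VQ, ⟪e2, v⟫ = R v) :
    ‖e2‖ ≤ ‖eStar‖ ∧ ‖eStar‖ ≤ (Real.sqrt (1 - γ ^ 2))⁻¹ * ‖e2‖ := by
  have hΛ_le : VΛ ≤ VΛ ⊔ Vt ⊔ VQ := le_sup_left.trans le_sup_left
  have hdetail_le : Vt ⊔ VQ ≤ VΛ ⊔ Vt ⊔ VQ := sup_assoc VΛ Vt VQ ▸ le_sup_right
  refine ⟨norm_le_of_inner_eq_norm_sq ?_, ?_⟩
  · rw [hGalStar e2 (hdetail_le he2), ← hGal2 e2 he2, real_inner_self_eq_norm_sq]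
  obtain ⟨v, hv, w, hw, rfl⟩ := Submodule.mem_sup.mp (sup_assoc VΛ Vt VQ ▸ heStar)
  have hnorm_sq : ‖v + w‖ ^ 2 ≤ ‖e2‖ * ‖w‖ :=
    calc ‖v + w‖ ^ 2 = ⟪v + w, v⟫ + ⟪v + w, w⟫ := by
          rw [← inner_add_right, real_inner_self_eq_norm_sq]
      _ = ⟪e2, w⟫ := by
          rw [hGalStar v (hΛ_le hv), hRΛ v hv, hGalStar w (hdetail_le hw), hGal2 w hw, zero_add]
      _ ≤ ‖e2‖ * ‖w‖ := real_inner_le_norm e2 w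
  have hCBS_detail : StrengthenedCBS γ VΛ (Vt ⊔ VQ) :=
    StrengthenedCBS.sup_of_inner_eq_zero hCBS hγ0 horthΛ hortht
  exact le_inv_mul_of_sq_le_mul (Real.sqrt_pos.2 (by nlinarith)) (norm_nonneg e2) hnorm_sq
    (hCBS_detail.sqrt_one_sub_sq_mul_norm_le hv hw)
end
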